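/- arXiv:1803.02957 — 2 statements merged into one kernel-verified Lean document; each statement's English description precedes it below -/
import Mathlib

section
/- Let S be a finite set of r points in the complex projective plane P^2 satisfying the Cayley–Bacharach condition CB(m). If r ≤ (5/2)·m + 1, then S is contained in a plane curve C ⊂ P^2 of degree at most 2 (a line, a smooth conic, or a union of two lines). -/
open MvPolynomial

noncomputable section

/-- Points of the complex projective space whose homogeneous coordinates are
indexed by `ι` (so for `ι = Fin (N+1)` this is `ℙ^N`). -/
abbrev PPt (ι : Type) : Type := Projectivization ℂ (ι → ℂ)

/-- A polynomial vanishes at a projective point if it vanishes at every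
representative vector of the point. -/
def PVanish {ι : Type} (f : MvPolynomial ι ℂ) (x : PPt ι) : Prop :=
  ∀ (v : ι → ℂ) (hv : v ≠ 0), Projectivization.mk ℂ v hv = x → eval v f = 0

/-- The zero locus of a polynomial in projective space. -/
def ZeroSet {ι : Type} (f : MvPolynomial ι ℂ) : Set (PPt ι) :=
  {x | PVanish f x}

/-- Zariski-closed subsets of projective space: common zero loci of families of
homogeneous polynomials. -/
def IsZClosed {ι : Type} (Y : Set (PPt ι)) : Prop :=
  ∃ fs : Set (MvPolynomial ι ℂ),
    (∀ f ∈ fs, ∃ e, f.IsHomogeneous e) ∧ Y = {x | ∀ f ∈ fs, PVanish f x}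

/-- `U` contains a dense (Zariski-)open subset of `X`: there is a Zariski-closed
set `Y` not containing `X` with `X \ Y ⊆ U`.  Taking `X = Set.univ` this is the
notion of a set containing "the general point" of the ambient projective space. -/
def ContainsDenseOpenOf {ι : Type} (X U : Set (PPt ι)) : Prop :=
  ∃ Y : Set (PPt ι), IsZClosed Y ∧ ¬ X ⊆ Y ∧ X \ Y ⊆ U

/-- The set of projective points lying in (the projectivization of) a linear
subspace `W`. -/
def LinSet {ι : Type} (W : Submodule ℂ (ι → ℂ)) : Set (PPt ι) :=
  {x | x.submodule ≤ W}

/-- A line in projective space: the projectivization of a 2-dimensional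
linear subspace. -/
def IsLine {ι : Type} (L : Set (PPt ι)) : Prop :=
  ∃ W : Submodule ℂ (ι → ℂ), Module.finrank ℂ W = 2 ∧ L = LinSet W

/-- A smooth plane conic with supporting plane `P(W)`: the zero locus, inside the
projective plane `P(W)`, of a quadric which does not vanish identically on `W`
and whose restriction to `W` has no singular points. -/
def IsConicIn {ι : Type} [Fintype ι] (W : Submodule ℂ (ι → ℂ))
    (C : Set (PPt ι)) : Prop :=
  Module.finrank ℂ W = 3 ∧
  ∃ f : MvPolynomial ι ℂ, f.IsHomogeneous 2 ∧
    C = {x | x.submodule ≤ W ∧ PVanish f x} ∧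
    (∃ v ∈ W, eval v f ≠ 0) ∧
    (∀ v ∈ W, v ≠ 0 → eval v f = 0 →
      ∃ w ∈ W, (∑ i, eval v (pderiv i f) * w i) ≠ 0)

/-- A smooth plane conic in projective space. -/
def IsSmoothConic {ι : Type} [Fintype ι] (C : Set (PPt ι)) : Prop :=
  ∃ W, IsConicIn W C

/-- The Cayley–Bacharach condition `CB(m)`: every degree-`m` hypersurface
containing all points of `S` but one contains all of `S`. -/
def SatisfiesCB {ι : Type} (m : ℕ) (S : Finset (PPt ι)) : Prop :=
  ∀ f : MvPolynomial ι ℂ, f.IsHomogeneous m →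
    ∀ p ∈ S, (∀ q ∈ S, q ≠ p → PVanish f q) → PVanish f p

/-- A smooth projective hypersurface of degree `e`: the partial derivatives of
its (homogeneous) equation have no common nontrivial zero. -/
def IsSmoothHyp {ι : Type} [Fintype ι] (f : MvPolynomial ι ℂ) (e : ℕ) : Prop :=
  f.IsHomogeneous e ∧ f ≠ 0 ∧
    ∀ v : ι → ℂ, v ≠ 0 → ¬ (∀ i, eval v (pderiv i f) = 0)

/-- `{f = g = 0}` is a smooth complete intersection: at every common nontrivial
zero the two gradients are linearly independent. -/
def IsSmoothCI2 {ι : Type} [Fintype ι] (f g : MvPolynomial ι ℂ) : Prop :=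
  ∀ v : ι → ℂ, v ≠ 0 → eval v f = 0 → eval v g = 0 →
    ∀ a b : ℂ, (∀ i, a * eval v (pderiv i f) + b * eval v (pderiv i g) = 0) →
      a = 0 ∧ b = 0

/-- `{f = g = h = 0}` is a smooth complete intersection: at every common
nontrivial zero the three gradients are linearly independent. -/
def IsSmoothCI3 {ι : Type} [Fintype ι] (f g h : MvPolynomial ι ℂ) : Prop :=
  ∀ v : ι → ℂ, v ≠ 0 → eval v f = 0 → eval v g = 0 → eval v h = 0 →
    ∀ a b c : ℂ,
      (∀ i, a * eval v (pderiv i f) + b * eval v (pderiv i g)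
        + c * eval v (pderiv i h) = 0) →
      a = 0 ∧ b = 0 ∧ c = 0

/-- A rational map from (a subvariety of) the projective space with coordinates
`ι` to `ℙ^n`, given by an `(n+1)`-tuple of homogeneous polynomials of a common
degree `e`. -/
structure RatMapTo (ι : Type) (n : ℕ) where
  F : Fin (n + 1) → MvPolynomial ι ℂ
  e : ℕ
  homog : ∀ j, (F j).IsHomogeneous e

namespace RatMapTo

variable {ι : Type} {n : ℕ}

def evalVec (φ : RatMapTo ι n) (v : ι → ℂ) : Fin (n + 1) → ℂ :=
  fun j => eval v (φ.F j)

/-- `φ` is defined at `x` and sends `x` to `y`. -/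
def mapsTo (φ : RatMapTo ι n) (x : PPt ι) (y : PPt (Fin (n + 1))) : Prop :=
  ∀ (v : ι → ℂ) (hv : v ≠ 0), Projectivization.mk ℂ v hv = x →
    ∃ hw : φ.evalVec v ≠ 0, Projectivization.mk ℂ (φ.evalVec v) hw = y

/-- The fiber over `y` of the restriction of `φ` to `X`. -/
def fiber (φ : RatMapTo ι n) (X : Set (PPt ι)) (y : PPt (Fin (n + 1))) :
    Set (PPt ι) :=
  {x ∈ X | φ.mapsTo x y}

/-- The restriction of `φ` to `X` is a dominant rational map of degree `δ`:
the fiber over a general point of `ℙ^n` consists of exactly `δ` points. -/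
def DominantOfDegree (φ : RatMapTo ι n) (X : Set (PPt ι)) (δ : ℕ) : Prop :=
  0 < δ ∧
  ∃ V : Set (PPt (Fin (n + 1))), ContainsDenseOpenOf Set.univ V ∧
    ∀ y ∈ V, (φ.fiber X y).Finite ∧ (φ.fiber X y).ncard = δ

end RatMapTo

/-- The degree of irrationality of `X`: the minimal degree of a dominant
rational map `X ⇢ ℙ^n`. -/
def irr {ι : Type} (n : ℕ) (X : Set (PPt ι)) : ℕ :=
  sInf {δ : ℕ | ∃ φ : RatMapTo ι n, φ.DominantOfDegree X δ}

/-- `ψ` is the linear projection away from the linear subspace `P(W)`: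
it is given by linear forms whose common kernel is exactly `W`. -/
def IsLinearProjectionFrom {ι : Type} {n : ℕ} (ψ : RatMapTo ι n)
    (W : Submodule ℂ (ι → ℂ)) : Prop :=
  ψ.e = 1 ∧ ∀ v : ι → ℂ, ψ.evalVec v = 0 ↔ v ∈ W

/-- The rational maps `φ` and `ψ` on `X` are birationally equivalent: they
differ by composition with a birational automorphism `τ` of the target `ℙ^n`. -/
def BirEquivTo {ι : Type} {n : ℕ} (X : Set (PPt ι)) (φ ψ : RatMapTo ι n) : Prop :=
  ∃ τ : RatMapTo (Fin (n + 1)) n, τ.DominantOfDegree Set.univ 1 ∧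
    ∃ U : Set (PPt ι), ContainsDenseOpenOf X U ∧
      ∀ x ∈ U, ∃ y z, φ.mapsTo x y ∧ ψ.mapsTo x z ∧ τ.mapsTo z y

/-- `A` is contained in a proper Zariski-closed subset of the (projective) space
of degree-`d` forms: it is cut out by a polynomial in the coefficients which is
not identically zero on degree-`d` forms. -/
def CoeffPolyProperClosed {ι : Type} (d : ℕ) (A : Set (MvPolynomial ι ℂ)) : Prop :=
  ∃ (κ : ℕ) (mons : Fin κ → (ι →₀ ℕ)) (Q : MvPolynomial (Fin κ) ℂ),
    (∀ g ∈ A, eval (fun j => coeff (mons j) g) Q = 0) ∧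
    (∃ g : MvPolynomial ι ℂ, g.IsHomogeneous d ∧
      eval (fun j => coeff (mons j) g) Q ≠ 0)

end

/-!
By strong induction on `m` we show that `S` lies on a nonzero quadric. Over `ℂ` a ternary
quadric is either nondegenerate, and then no three of its points are collinear, or a product of
two linear forms (diagonalise it). A nonempty `CB(k)` set has at least `k + 2` points, and at least
`2k + 2` if no three of its points are collinear: otherwise the lines through pairs of the other
points would give a curve of degree `≤ k` through all points but one. Hence a nonempty `CB(k)`
set on a conic either lies on a line or has at least `2k + 2` points.

If `|S| > 5`, take a conic `C` through the largest possible number `b ≥ 5` of points of `S`. The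
points off `C` form a `CB(m - 2)` set `Γ` with `|Γ| ≤ b`, which by induction lies on a conic;
`|Γ| ≥ 2m - 2` is incompatible with `2|S| ≤ 5m + 2`, so `Γ` lies on a line `L` carrying at least
`m` points of `S`. The points off `L` form a `CB(m - 1)` set on a conic with fewer than `2m`
points, so they lie on a second line.
-/

noncomputable section

open scoped Classical

namespace MvPolynomial

variable {ι K : Type*}

theorem IsHomogeneous.eval_smul [CommSemiring K] {f : MvPolynomial ι K} {n : ℕ}
    (hf : f.IsHomogeneous n) (c : K) (v : ι → K) : eval (c • v) f = c ^ n * eval v f := by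
  simp only [eval_eq, Finset.mul_sum, Pi.smul_apply, smul_eq_mul, mul_pow,
    Finset.prod_mul_distrib, Finset.prod_pow_eq_pow_sum]
  refine Finset.sum_congr rfl fun d hd => ?_
  rw [← hf.degree_eq_sum_deg_support hd]
  ring

open scoped Pointwise in
theorem exists_quadraticForm_of_isHomogeneous_two [Fintype ι] [Field K] {f : MvPolynomial ι K}
    (hf : f.IsHomogeneous 2) :
    ∃ Q : QuadraticForm K (ι → K), (∀ v, Q v = eval v f) ∧
      ∀ v w, QuadraticMap.polar Q v w = ∑ i, eval v (pderiv i f) * w i := by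
  have hmem : f ∈ Submodule.span K (Set.range (X (R := K)) * Set.range (X (R := K))) := by
    rw [← Submodule.span_mul_span, ← homogeneousSubmodule_one_eq_span_X, ← pow_two,
      homogeneousSubmodule_one_pow]
    exact hf
  clear hf
  induction hmem using Submodule.span_induction with
  | mem g hg =>
    obtain ⟨_, ⟨i, rfl⟩, _, ⟨j, rfl⟩, rfl⟩ := hg
    refine ⟨QuadraticMap.linMulLin (LinearMap.proj i) (LinearMap.proj j), fun v => by simp,
      fun v w => ?_⟩
    simp [QuadraticMap.polar, Derivation.leibniz, pderiv_X, Pi.single_apply, add_mul,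
      apply_ite (eval v), ite_mul, Finset.sum_add_distrib]
    ring
  | zero => exact ⟨0, fun v => by simp, fun v w => by simp [QuadraticMap.polar]⟩
  | add g h _ _ hg hh =>
    obtain ⟨Q, hQ, hQp⟩ := hg
    obtain ⟨Q', hQ', hQ'p⟩ := hh
    refine ⟨Q + Q', fun v => by simp [hQ, hQ'], fun v w => ?_⟩
    rw [FunLike.coe_add, QuadraticMap.polar_add, hQp, hQ'p]
    simp [add_mul, Finset.sum_add_distrib]
  | smul c g _ hg =>
    obtain ⟨Q, hQ, hQp⟩ := hg
    refine ⟨c • Q, fun v => by simp [hQ], fun v w => ?_⟩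
    rw [FunLike.coe_smul, QuadraticMap.polar_smul, hQp]
    simp [Finset.mul_sum, mul_assoc]

-- `Sym ι d` indexes the monomials of degree `d`.
theorem exists_isHomogeneous_ne_zero_forall_eval_eq_zero [Fintype ι] [Field K] (d : ℕ)
    (P : Finset (ι → K)) (hP : P.card < Fintype.card (Sym ι d)) :
    ∃ f : MvPolynomial ι K, f.IsHomogeneous d ∧ f ≠ 0 ∧ ∀ v ∈ P, eval v f = 0 := by
  let mon : Sym ι d → MvPolynomial ι K := fun s => monomial (Multiset.toFinsupp (s : Multiset ι)) 1
  have hmon : LinearIndependent K mon := by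
    convert! (basisMonomials ι K).linearIndependent.comp _
      (Multiset.toFinsupp.injective.comp Sym.coe_injective)
  let Φ : (Sym ι d → K) →ₗ[K] (P → K) :=
    (LinearMap.pi fun v : P => (aeval v.1).toLinearMap) ∘ₗ Fintype.linearCombination K mon
  obtain ⟨c, hc, hc0⟩ := Submodule.exists_mem_ne_zero_of_ne_bot
    (LinearMap.ker_ne_bot_of_finrank_lt (f := Φ) (by simpa using hP))
  refine ⟨Fintype.linearCombination K mon c, ?_, ?_, fun v hv => ?_⟩
  · refine IsHomogeneous.sum _ _ _ fun s _ => ?_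
    rw [smul_monomial]
    refine isHomogeneous_monomial _ ?_
    simp [Finsupp.degree_apply]
  · intro h
    exact hc0 (_root_.funext (Fintype.linearIndependent_iff.mp hmon c h))
  · exact congr_fun (LinearMap.mem_ker.mp hc) ⟨v, hv⟩

end MvPolynomial

def NoThreeCollinear {K V : Type*} [DivisionRing K] [AddCommGroup V] [Module K V]
    (X : Set (Projectivization K V)) : Prop :=
  ∀ p ∈ X, ∀ q₁ ∈ X, ∀ q₂ ∈ X, p ≠ q₁ → p ≠ q₂ → q₁ ≠ q₂ →
    p.rep ∉ Submodule.span K {q₁.rep, q₂.rep}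

theorem NoThreeCollinear.mono {K V : Type*} [DivisionRing K] [AddCommGroup V] [Module K V]
    {X Y : Set (Projectivization K V)} (hY : NoThreeCollinear Y) (hXY : X ⊆ Y) :
    NoThreeCollinear X :=
  fun p hp q₁ hq₁ q₂ hq₂ => hY p (hXY hp) q₁ (hXY hq₁) q₂ (hXY hq₂)

theorem Projectivization.rep_mem_span_singleton_iff {K V : Type*} [DivisionRing K]
    [AddCommGroup V] [Module K V] {p q : Projectivization K V} :
    p.rep ∈ K ∙ q.rep ↔ p = q := by
  rw [Submodule.mem_span_singleton, ← Projectivization.mk_eq_mk_iff' K _ _ p.rep_nonzero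
    q.rep_nonzero, Projectivization.mk_rep, Projectivization.mk_rep]

theorem Module.Dual.exists_forall_sum_sq_eq_mul {K V ι : Type*} [Field K] [IsAlgClosed K]
    [AddCommGroup V] [Module K V] (s : Finset ι) (hs : s.card ≤ 2)
    (ℓ : ι → Module.Dual K V) :
    ∃ ℓ₁ ℓ₂ : Module.Dual K V, ∀ x, ∑ i ∈ s, ℓ i x ^ 2 = ℓ₁ x * ℓ₂ x := by
  obtain ⟨j, hj⟩ := IsAlgClosed.exists_eq_mul_self (-1 : K)
  interval_cases h : s.card
  · exact ⟨0, 0, by simp [Finset.card_eq_zero.mp h]⟩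
  · obtain ⟨i, rfl⟩ := Finset.card_eq_one.mp h
    exact ⟨ℓ i, ℓ i, by simp [sq]⟩
  · obtain ⟨i, i', hii', hs⟩ := Finset.card_eq_two.mp h
    rw [hs]
    refine ⟨ℓ i + j • ℓ i', ℓ i - j • ℓ i', fun x => ?_⟩
    simp only [Finset.sum_pair hii', LinearMap.add_apply, LinearMap.sub_apply,
      LinearMap.smul_apply, smul_eq_mul]
    linear_combination (-(ℓ i' x) ^ 2) * hj

namespace QuadraticForm

variable {K V : Type*} [Field K] [AddCommGroup V] [Module K V] {Q : QuadraticForm K V}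

theorem map_smul_add_smul (a b : K) (x y : V) :
    Q (a • x + b • y) = a * a * Q x + b * b * Q y + a * b * QuadraticMap.polar Q x y := by
  rw [QuadraticMap.map_add Q, QuadraticMap.map_smul, QuadraticMap.map_smul,
    QuadraticMap.polar_smul_left, QuadraticMap.polar_smul_right, smul_eq_mul, smul_eq_mul,
    smul_eq_mul, smul_eq_mul]
  ring

theorem forall_mem_span_pair_map_eq_zero {x y : V} (hx : Q x = 0) (hy : Q y = 0)
    (hxy : QuadraticMap.polar Q x y = 0) : ∀ z ∈ Submodule.span K {x, y}, Q z = 0 := by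
  intro z hz
  obtain ⟨a, b, rfl⟩ := Submodule.mem_span_pair.mp hz
  rw [map_smul_add_smul, hx, hy, hxy]
  ring

variable [FiniteDimensional K V] [Invertible (2 : K)]

theorem two_mul_finrank_le_of_forall_map_eq_zero (hQ : Q.radical = ⊥) {W : Submodule K V}
    (hW : ∀ x ∈ W, Q x = 0) : 2 * Module.finrank K W ≤ Module.finrank K V := by
  have hB : (QuadraticMap.polarBilin Q).Nondegenerate :=
    QuadraticMap.nondegenerate_polar_iff.mpr (QuadraticMap.nondegenerate_iff_radical_eq_bot.mpr hQ)
  have hWW : W ≤ LinearMap.BilinForm.orthogonal (QuadraticMap.polarBilin Q) W := fun x hx y hy => by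
    simp [QuadraticMap.polar, hW _ hx, hW _ hy, hW _ (W.add_mem hy hx)]
  have := Submodule.finrank_mono hWW
  rw [LinearMap.BilinForm.finrank_orthogonal hB] at this
  have := Submodule.finrank_le W
  omega

theorem noThreeCollinear_of_radical_eq_bot (hQ : Q.radical = ⊥)
    (hV : Module.finrank K V < 4) : NoThreeCollinear {p : Projectivization K V | Q p.rep = 0} := by
  intro p hp q₁ hq₁ q₂ hq₂ hpq₁ hpq₂ hq₁₂ hspan
  obtain ⟨a, b, hab⟩ := Submodule.mem_span_pair.mp hspan
  have ha : a ≠ 0 := by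
    rintro rfl
    exact hpq₂ (Projectivization.rep_mem_span_singleton_iff.mp
      (Submodule.mem_span_singleton.mpr ⟨b, by simpa using hab⟩))
  have hb : b ≠ 0 := by
    rintro rfl
    exact hpq₁ (Projectivization.rep_mem_span_singleton_iff.mp
      (Submodule.mem_span_singleton.mpr ⟨a, by simpa using hab⟩))
  -- A third point of the conic on the line `q₁q₂` puts the whole line into the conic.
  have hpolar : QuadraticMap.polar Q q₁.rep q₂.rep = 0 := by
    have h := map_smul_add_smul (Q := Q) a b q₁.rep q₂.rep
    rw [hab, hp, hq₁, hq₂] at h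
    simpa [ha, hb] using h.symm
  have hli : LinearIndependent K ![q₁.rep, q₂.rep] := by
    have := Projectivization.independent_iff.mp
      ((Projectivization.independent_pair_iff_ne q₁ q₂).mpr hq₁₂)
    convert this using 1
    ext i
    fin_cases i <;> rfl
  have h2 : Module.finrank K (Submodule.span K {q₁.rep, q₂.rep}) = 2 := by
    rw [← Matrix.range_cons_cons_empty q₁.rep q₂.rep ![], finrank_span_eq_card hli,
      Fintype.card_fin]
  have := two_mul_finrank_le_of_forall_map_eq_zero hQ
    (forall_mem_span_pair_map_eq_zero hq₁ hq₂ hpolar)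
  omega

theorem exists_eq_mul_of_radical_ne_bot [IsAlgClosed K] (hV : Module.finrank K V ≤ 3)
    (hQ : Q.radical ≠ ⊥) : ∃ ℓ₁ ℓ₂ : Module.Dual K V, ∀ x, Q x = ℓ₁ x * ℓ₂ x := by
  -- In diagonal form a nonzero radical means a zero weight, leaving at most two squares.
  obtain ⟨w, ⟨e⟩⟩ := Q.equivalent_weightedSumSquares
  have hs : (Finset.univ.filter fun i => w i ≠ 0).card ≤ 2 := by
    have hpos := Submodule.one_le_finrank_iff.mpr hQ
    rw [finrank_radical_of_equiv_weightedSumSquares ⟨e⟩, Set.ncard_eq_toFinset_card',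
      Set.toFinset_ofPred] at hpos
    have := Finset.card_filter_add_card_filter_not (s := Finset.univ) fun i => w i = 0
    simp only [Finset.card_univ, Fintype.card_fin, ← ne_eq] at this
    omega
  choose r hr using fun i => IsAlgClosed.exists_eq_mul_self (w i)
  obtain ⟨ℓ₁, ℓ₂, h⟩ := Module.Dual.exists_forall_sum_sq_eq_mul _ hs
    fun i => r i • (LinearMap.proj i ∘ₗ e.toLinearEquiv.toLinearMap)
  refine ⟨ℓ₁, ℓ₂, fun x => ?_⟩
  rw [← h, ← e.map_app x, QuadraticMap.weightedSumSquares_apply]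
  rw [Finset.sum_filter_of_ne fun i _ hi => ?_]
  · refine Finset.sum_congr rfl fun i _ => ?_
    simp [hr, smul_eq_mul]
    ring
  · intro h0
    simp only [ne_eq, pow_eq_zero_iff, OfNat.ofNat_ne_zero, not_false_eq_true, LinearMap.smul_apply,
      smul_eq_mul, mul_eq_zero, not_or] at hi
    exact hi.1 (mul_self_eq_zero.mp ((hr i).symm.trans h0))

end QuadraticForm

section ProjectiveVanishing

variable {ι : Type} {f g : MvPolynomial ι ℂ} {x : PPt ι}

theorem pvanish_iff_eval_rep {n : ℕ} (hf : f.IsHomogeneous n) :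
    PVanish f x ↔ eval x.rep f = 0 := by
  refine ⟨fun h => h x.rep x.rep_nonzero x.mk_rep, fun h v hv hvx => ?_⟩
  obtain ⟨a, rfl⟩ := (Projectivization.mk_eq_mk_iff' ℂ v x.rep hv x.rep_nonzero).mp
    (by rw [hvx, x.mk_rep])
  rw [hf.eval_smul, h, mul_zero]

theorem PVanish.mul_right (h : PVanish f x) (g : MvPolynomial ι ℂ) : PVanish (f * g) x :=
  fun v hv hvx => by rw [map_mul, h v hv hvx, zero_mul]

theorem PVanish.mul_left (h : PVanish g x) (f : MvPolynomial ι ℂ) : PVanish (f * g) x :=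
  fun v hv hvx => by rw [map_mul, h v hv hvx, mul_zero]

theorem pvanish_mul_iff {m n : ℕ} (hf : f.IsHomogeneous m) (hg : g.IsHomogeneous n) :
    PVanish (f * g) x ↔ PVanish f x ∨ PVanish g x := by
  rw [pvanish_iff_eval_rep (hf.mul hg), pvanish_iff_eval_rep hf, pvanish_iff_eval_rep hg,
    map_mul, mul_eq_zero]

variable [Fintype ι]

def linearForm (ℓ : Module.Dual ℂ (ι → ℂ)) : MvPolynomial ι ℂ :=
  ∑ i, C (ℓ (Pi.single i 1)) * X i

@[simp]
theorem eval_linearForm (ℓ : Module.Dual ℂ (ι → ℂ)) (v : ι → ℂ) :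
    eval v (linearForm ℓ) = ℓ v := by
  rw [LinearMap.pi_apply_eq_sum_univ ℓ v]
  simp only [linearForm, map_sum, map_mul, eval_C, eval_X, mul_comm, smul_eq_mul]
  congr! 3 with i
  ext j
  simp [Pi.single_apply, eq_comm]

theorem isHomogeneous_linearForm (ℓ : Module.Dual ℂ (ι → ℂ)) : (linearForm ℓ).IsHomogeneous 1 :=
  IsHomogeneous.sum _ _ _ fun i _ => isHomogeneous_C_mul_X _ i

theorem linearForm_ne_zero {ℓ : Module.Dual ℂ (ι → ℂ)} (hℓ : ℓ ≠ 0) : linearForm ℓ ≠ 0 := by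
  refine fun h => hℓ (LinearMap.ext fun v => ?_)
  rw [← eval_linearForm, h, map_zero, LinearMap.zero_apply]

theorem pvanish_linearForm_iff {ℓ : Module.Dual ℂ (ι → ℂ)} :
    PVanish (linearForm ℓ) x ↔ ℓ x.rep = 0 := by
  rw [pvanish_iff_eval_rep (isHomogeneous_linearForm ℓ), eval_linearForm]

theorem zeroSet_linearForm (ℓ : Module.Dual ℂ (ι → ℂ)) :
    ZeroSet (linearForm ℓ) = LinSet (LinearMap.ker ℓ) := by
  ext x
  simp [ZeroSet, LinSet, pvanish_linearForm_iff, x.submodule_eq,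
    Submodule.span_singleton_le_iff_mem]

theorem exists_linearForm_of_rep_notMem {U : Submodule ℂ (ι → ℂ)} (hx : x.rep ∉ U) :
    ∃ ℓ : Module.Dual ℂ (ι → ℂ), (∀ y : PPt ι, y.rep ∈ U → PVanish (linearForm ℓ) y) ∧
      ¬ PVanish (linearForm ℓ) x := by
  obtain ⟨ℓ, hℓx, hℓU⟩ := U.exists_dual_map_eq_bot_of_notMem hx inferInstance
  refine ⟨ℓ, fun y hy => pvanish_linearForm_iff.mpr ?_, pvanish_linearForm_iff.not.mpr hℓx⟩
  exact (Submodule.mem_bot ℂ).mp (hℓU ▸ Submodule.mem_map_of_mem hy)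

end ProjectiveVanishing

section CayleyBacharach

variable {ι : Type} {m : ℕ} {S : Finset (PPt ι)}

theorem SatisfiesCB.residual (hS : SatisfiesCB m S) {g : MvPolynomial ι ℂ} {k : ℕ}
    (hg : g.IsHomogeneous k) (hk : k ≤ m) :
    SatisfiesCB (m - k) (S.filter fun x => ¬ PVanish g x) := by
  intro f hf p hp hvan
  obtain ⟨hpS, hgp⟩ := Finset.mem_filter.mp hp
  have hfg : PVanish (f * g) p := by
    refine hS (f * g) (by simpa [Nat.sub_add_cancel hk] using hf.mul hg) p hpS fun q hq hqp => ?_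
    by_cases hgq : PVanish g q
    · exact hgq.mul_left f
    · exact (hvan q (Finset.mem_filter.mpr ⟨hq, hgq⟩) hqp).mul_right g
  exact ((pvanish_mul_iff hf hg).mp hfg).resolve_right hgp

variable [Fintype ι]

theorem SatisfiesCB.of_le (hS : SatisfiesCB m S) {k : ℕ} (hk : k ≤ m) : SatisfiesCB k S := by
  intro f hf p hp hvan
  obtain ⟨ℓ, -, hℓp⟩ := exists_linearForm_of_rep_notMem (x := p) (U := ⊥)
    (by simpa using p.rep_nonzero)
  have hpad := (isHomogeneous_linearForm ℓ).pow (m - k)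
  have h := hS _ (by simpa [Nat.add_sub_cancel' hk] using hf.mul hpad) p hp
    fun q hq hqp => (hvan q hq hqp).mul_right _
  rw [pvanish_mul_iff hf hpad, pvanish_iff_eval_rep hpad, map_pow] at h
  exact h.resolve_right (pow_ne_zero _ (by simpa [pvanish_linearForm_iff] using hℓp))

theorem exists_pvanish_forall_of_notMem {p : PPt ι} {T : Finset (PPt ι)} (hp : p ∉ T) :
    ∃ g : MvPolynomial ι ℂ, g.IsHomogeneous T.card ∧ (∀ q ∈ T, PVanish g q) ∧ ¬ PVanish g p := by
  induction T using Finset.induction_on with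
  | empty =>
    refine ⟨1, isHomogeneous_one _ _, by simp, ?_⟩
    rw [pvanish_iff_eval_rep (isHomogeneous_one _ _), map_one]
    exact one_ne_zero
  | insert a T haT ih =>
    obtain ⟨g, hg, hgT, hgp⟩ := ih fun h => hp (Finset.mem_insert_of_mem h)
    obtain ⟨ℓ, hℓa, hℓp⟩ := exists_linearForm_of_rep_notMem (x := p) (U := ℂ ∙ a.rep)
      (Projectivization.rep_mem_span_singleton_iff.not.mpr
        fun h => hp (h ▸ Finset.mem_insert_self a T))
    refine ⟨linearForm ℓ * g, ?_, ?_, ?_⟩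
    · rw [Finset.card_insert_of_notMem haT, add_comm]
      exact (isHomogeneous_linearForm ℓ).mul hg
    · rintro q hq
      rcases Finset.mem_insert.mp hq with rfl | hq
      · exact (hℓa q (Submodule.mem_span_singleton_self _)).mul_right g
      · exact (hgT q hq).mul_left _
    · rw [pvanish_mul_iff (isHomogeneous_linearForm ℓ) hg]
      exact not_or.mpr ⟨hℓp, hgp⟩

theorem SatisfiesCB.add_two_le_card (hS : SatisfiesCB m S) (hne : S.Nonempty) :
    m + 2 ≤ S.card := by
  obtain ⟨p, hp⟩ := hne
  obtain ⟨g, hg, hgT, hgp⟩ := exists_pvanish_forall_of_notMem (S.notMem_erase p)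
  by_contra! h
  refine hgp ((hS.of_le (by rw [Finset.card_erase_of_mem hp]; omega)) g hg p hp
    fun q hq hqp => hgT q (Finset.mem_erase.mpr ⟨hqp, hq⟩))

theorem exists_pvanish_forall_of_noThreeCollinear {p : PPt ι} {T : Finset (PPt ι)}
    (hp : p ∉ T) (hT : NoThreeCollinear (insert p (T : Set (PPt ι)))) :
    ∃ g : MvPolynomial ι ℂ, g.IsHomogeneous ((T.card + 1) / 2) ∧ (∀ q ∈ T, PVanish g q) ∧
      ¬ PVanish g p := by
  induction T using Finset.strongInduction with
  | H T ih =>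
  by_cases hT1 : T.card ≤ 1
  · rw [show (T.card + 1) / 2 = T.card by omega]
    exact exists_pvanish_forall_of_notMem hp
  obtain ⟨q₁, hq₁, q₂, hq₂, hq₁₂⟩ := Finset.one_lt_card.mp (not_le.mp hT1)
  obtain ⟨ℓ, hℓq, hℓp⟩ := exists_linearForm_of_rep_notMem (x := p)
    (U := Submodule.span ℂ {q₁.rep, q₂.rep})
    (hT p (Set.mem_insert _ _) q₁ (Set.mem_insert_of_mem _ hq₁) q₂ (Set.mem_insert_of_mem _ hq₂)
      (fun h => hp (h ▸ hq₁)) (fun h => hp (h ▸ hq₂)) hq₁₂)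
  set T' := (T.erase q₁).erase q₂
  have hT' : T' ⊂ T := (Finset.erase_ssubset (Finset.mem_erase.mpr ⟨hq₁₂.symm, hq₂⟩)).trans_le
    (Finset.erase_subset _ _)
  have hcard : T'.card + 2 = T.card := by
    rw [Finset.card_erase_of_mem (Finset.mem_erase.mpr ⟨hq₁₂.symm, hq₂⟩),
      Finset.card_erase_of_mem hq₁]
    omega
  obtain ⟨g, hg, hgT, hgp⟩ := ih T' hT' (fun h => hp (hT'.subset h))
    (hT.mono (Set.insert_subset_insert (by exact_mod_cast hT'.subset)))
  refine ⟨linearForm ℓ * g, ?_, fun q hq => ?_, ?_⟩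
  · rw [show (T.card + 1) / 2 = 1 + (T'.card + 1) / 2 by omega]
    exact (isHomogeneous_linearForm ℓ).mul hg
  · by_cases hq' : q ∈ T'
    · exact (hgT q hq').mul_left _
    · refine (hℓq q ?_).mul_right g
      have : q = q₁ ∨ q = q₂ := by
        simp only [T', Finset.mem_erase] at hq'
        tauto
      rcases this with rfl | rfl
      exacts [Submodule.subset_span (by simp), Submodule.subset_span (by simp)]
  · rw [pvanish_mul_iff (isHomogeneous_linearForm ℓ) hg]
    exact not_or.mpr ⟨hℓp, hgp⟩

theorem SatisfiesCB.two_mul_add_two_le_card (hS : SatisfiesCB m S) (hne : S.Nonempty)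
    (hS3 : NoThreeCollinear (S : Set (PPt ι))) : 2 * m + 2 ≤ S.card := by
  obtain ⟨p, hp⟩ := hne
  obtain ⟨g, hg, hgT, hgp⟩ := exists_pvanish_forall_of_noThreeCollinear (S.notMem_erase p)
    (by rwa [Finset.coe_erase, Set.insert_sdiff_singleton, Set.insert_eq_of_mem hp])
  by_contra! h
  refine hgp ((hS.of_le (by rw [Finset.card_erase_of_mem hp]; omega)) g hg p hp
    fun q hq hqp => hgT q (Finset.mem_erase.mpr ⟨hqp, hq⟩))

theorem SatisfiesCB.forall_pvanish_or_add_two_le_card (hS : SatisfiesCB m S)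
    {g : MvPolynomial ι ℂ} {k : ℕ} (hg : g.IsHomogeneous k) (hk : k ≤ m) :
    (∀ x ∈ S, PVanish g x) ∨ m - k + 2 ≤ (S.filter fun x => ¬ PVanish g x).card := by
  rcases (S.filter fun x => ¬ PVanish g x).eq_empty_or_nonempty with h | h
  · left
    simpa [Finset.filter_eq_empty_iff] using h
  · exact Or.inr ((hS.residual hg hk).add_two_le_card h)

end CayleyBacharach

section PlaneConics

def LiesOnConic (S : Finset (PPt (Fin 3))) : Prop :=
  ∃ f : MvPolynomial (Fin 3) ℂ, f.IsHomogeneous 2 ∧ f ≠ 0 ∧ ∀ x ∈ S, PVanish f x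

def LiesOnLine (S : Finset (PPt (Fin 3))) : Prop :=
  ∃ g : MvPolynomial (Fin 3) ℂ, g.IsHomogeneous 1 ∧ g ≠ 0 ∧ ∀ x ∈ S, PVanish g x

theorem liesOnConic_of_card_le_five {S : Finset (PPt (Fin 3))} (hS : S.card ≤ 5) :
    LiesOnConic S := by
  obtain ⟨f, hf, hf0, hfS⟩ := exists_isHomogeneous_ne_zero_forall_eval_eq_zero 2
    (S.image Projectivization.rep) (by
      rw [Sym.card_sym_eq_multichoose, Fintype.card_fin]
      exact (Finset.card_image_le.trans hS).trans_lt (by rw [Nat.multichoose_eq]; decide))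
  exact ⟨f, hf, hf0, fun x hx =>
    (pvanish_iff_eval_rep hf).mpr (hfS _ (Finset.mem_image_of_mem _ hx))⟩

theorem liesOnConic_of_lines {S : Finset (PPt (Fin 3))} {g₁ g₂ : MvPolynomial (Fin 3) ℂ}
    (hg₁ : g₁.IsHomogeneous 1) (hg₂ : g₂.IsHomogeneous 1) (hg₁0 : g₁ ≠ 0) (hg₂0 : g₂ ≠ 0)
    (hS : ∀ x ∈ S, PVanish (g₁ * g₂) x) : LiesOnConic S :=
  ⟨g₁ * g₂, hg₁.mul hg₂, mul_ne_zero hg₁0 hg₂0, hS⟩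

theorem smooth_and_noThreeCollinear_or_zeroSet_eq_union {f : MvPolynomial (Fin 3) ℂ}
    (hf : f.IsHomogeneous 2) (hf0 : f ≠ 0) :
    ((∀ v, v ≠ 0 → eval v f = 0 → ∃ w : Fin 3 → ℂ, ∑ i, eval v (pderiv i f) * w i ≠ 0) ∧
        NoThreeCollinear (ZeroSet f)) ∨
      ∃ ℓ₁ ℓ₂ : Module.Dual ℂ (Fin 3 → ℂ), ℓ₁ ≠ 0 ∧ ℓ₂ ≠ 0 ∧
        ZeroSet f = ZeroSet (linearForm ℓ₁) ∪ ZeroSet (linearForm ℓ₂) := by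
  obtain ⟨Q, hQf, hQpolar⟩ := exists_quadraticForm_of_isHomogeneous_two hf
  have hV : Module.finrank ℂ (Fin 3 → ℂ) = 3 := by simp
  by_cases hQ : Q.radical = ⊥
  · refine Or.inl ⟨fun v hv0 _ => ?_, ?_⟩
    · have hv : v ∉ Q.radical := by simpa [hQ] using hv0
      rw [QuadraticMap.radical_eq_ker_polarBilin, LinearMap.mem_ker] at hv
      obtain ⟨w, hw⟩ : ∃ w, QuadraticMap.polarBilin Q v w ≠ 0 := by
        by_contra! h
        exact hv (LinearMap.ext h)
      exact ⟨w, by rwa [← hQpolar]⟩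
    · convert QuadraticForm.noThreeCollinear_of_radical_eq_bot hQ (by omega) using 1
      ext x
      simp [ZeroSet, pvanish_iff_eval_rep hf, hQf]
  · obtain ⟨ℓ₁, ℓ₂, h⟩ := QuadraticForm.exists_eq_mul_of_radical_ne_bot hV.le hQ
    have hfℓ : ∀ v, eval v f = ℓ₁ v * ℓ₂ v := fun v => by rw [← hQf, h]
    refine Or.inr ⟨ℓ₁, ℓ₂, ?_, ?_, ?_⟩
    · rintro rfl
      exact hf0 (MvPolynomial.funext fun v => by simp [hfℓ])
    · rintro rfl
      exact hf0 (MvPolynomial.funext fun v => by simp [hfℓ])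
    · ext x
      simp [ZeroSet, pvanish_iff_eval_rep hf, pvanish_linearForm_iff, hfℓ]

theorem isLine_linSet_ker {ℓ : Module.Dual ℂ (Fin 3 → ℂ)} (hℓ : ℓ ≠ 0) :
    IsLine (LinSet (LinearMap.ker ℓ)) := by
  refine ⟨_, ?_, rfl⟩
  have := Module.Dual.finrank_ker_add_one_of_ne_zero hℓ
  simp only [Module.finrank_fin_fun] at this
  omega

theorem LiesOnConic.exists_smoothConic_or_exists_lines {S : Finset (PPt (Fin 3))}
    (hS : LiesOnConic S) :
    (∃ C : Set (PPt (Fin 3)), IsSmoothConic C ∧ ↑S ⊆ C) ∨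
      ∃ L₁ L₂ : Set (PPt (Fin 3)), IsLine L₁ ∧ IsLine L₂ ∧ ↑S ⊆ L₁ ∪ L₂ := by
  obtain ⟨f, hf, hf0, hfS⟩ := hS
  rcases smooth_and_noThreeCollinear_or_zeroSet_eq_union hf hf0 with
    ⟨hsmooth, -⟩ | ⟨ℓ₁, ℓ₂, hℓ₁, hℓ₂, hfℓ⟩
  · obtain ⟨v, hv⟩ : ∃ v, eval v f ≠ 0 := by
      by_contra! h
      exact hf0 (MvPolynomial.funext (by simpa using h))
    refine Or.inl ⟨{x | x.submodule ≤ ⊤ ∧ PVanish f x},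
      ⟨⊤, by simp, f, hf, rfl, ⟨v, Submodule.mem_top, hv⟩, fun v _ hv0 hv => ?_⟩,
      fun x hx => ⟨le_top, hfS x hx⟩⟩
    obtain ⟨w, hw⟩ := hsmooth v hv0 hv
    exact ⟨w, Submodule.mem_top, hw⟩
  · refine Or.inr ⟨_, _, isLine_linSet_ker hℓ₁, isLine_linSet_ker hℓ₂, fun x hx => ?_⟩
    have hx : x ∈ ZeroSet f := hfS x hx
    rwa [hfℓ, zeroSet_linearForm, zeroSet_linearForm] at hx

theorem exists_conic_forall_card_le (S : Finset (PPt (Fin 3))) :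
    ∃ f : MvPolynomial (Fin 3) ℂ, f.IsHomogeneous 2 ∧ f ≠ 0 ∧
      ∀ T ⊆ S, LiesOnConic T → T.card ≤ (S.filter fun x => PVanish f x).card := by
  obtain ⟨T, hT, hTmax⟩ := (S.powerset.filter LiesOnConic).exists_max_image Finset.card
    ⟨∅, Finset.mem_filter.mpr ⟨S.empty_mem_powerset, liesOnConic_of_card_le_five (by simp)⟩⟩
  obtain ⟨hTS, f, hf, hf0, hfT⟩ := by simpa using hT
  exact ⟨f, hf, hf0, fun T' hT'S hT' => (hTmax T' (by simp [hT'S, hT'])).trans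
    (Finset.card_le_card fun x hx => Finset.mem_filter.mpr ⟨hTS hx, hfT x hx⟩)⟩

end PlaneConics

section Induction

variable {k m : ℕ} {S : Finset (PPt (Fin 3))}

theorem SatisfiesCB.liesOnLine_or_two_mul_add_two_le_card (hS : SatisfiesCB k S)
    (hne : S.Nonempty) (hconic : LiesOnConic S) : LiesOnLine S ∨ 2 * k + 2 ≤ S.card := by
  obtain ⟨f, hf, hf0, hfS⟩ := hconic
  rcases smooth_and_noThreeCollinear_or_zeroSet_eq_union hf hf0 with
    ⟨-, hf3⟩ | ⟨ℓ₁, ℓ₂, hℓ₁, hℓ₂, hfℓ⟩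
  · exact Or.inr (hS.two_mul_add_two_le_card hne (hf3.mono hfS))
  rcases Nat.eq_zero_or_pos k with rfl | hk
  · exact Or.inr (hS.add_two_le_card hne)
  rcases hS.forall_pvanish_or_add_two_le_card (isHomogeneous_linearForm ℓ₁) hk with h₁ | h₁
  · exact Or.inl ⟨_, isHomogeneous_linearForm ℓ₁, linearForm_ne_zero hℓ₁, h₁⟩
  rcases hS.forall_pvanish_or_add_two_le_card (isHomogeneous_linearForm ℓ₂) hk with h₂ | h₂
  · exact Or.inl ⟨_, isHomogeneous_linearForm ℓ₂, linearForm_ne_zero hℓ₂, h₂⟩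
  have hcover (x) (hx : x ∈ S) : PVanish (linearForm ℓ₁) x ∨ PVanish (linearForm ℓ₂) x :=
    (hfℓ ▸ hfS x hx : x ∈ ZeroSet (linearForm ℓ₁) ∪ ZeroSet (linearForm ℓ₂))
  have hdisj : Disjoint (S.filter fun x => ¬ PVanish (linearForm ℓ₁) x)
      (S.filter fun x => ¬ PVanish (linearForm ℓ₂) x) :=
    Finset.disjoint_filter.mpr fun x hx h h' => (hcover x hx).elim h h'
  have := (Finset.card_union_of_disjoint hdisj).symm.trans_le
    (Finset.card_le_card (Finset.union_subset (S.filter_subset _) (S.filter_subset _)))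
  exact Or.inr (by omega)

theorem SatisfiesCB.liesOnConic_of_le_card_line
    (ih : ∀ k < m, ∀ T : Finset (PPt (Fin 3)), SatisfiesCB k T → 2 * T.card ≤ 5 * k + 2 →
      LiesOnConic T)
    (hS : SatisfiesCB m S) (hm : 3 ≤ m) (hcard : 2 * S.card ≤ 5 * m + 2)
    {g : MvPolynomial (Fin 3) ℂ} (hg : g.IsHomogeneous 1) (hg0 : g ≠ 0)
    (hline : m ≤ (S.filter fun x => PVanish g x).card) : LiesOnConic S := by
  set Γ := S.filter fun x => ¬ PVanish g x
  have hsplit : (S.filter fun x => PVanish g x).card + Γ.card = S.card :=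
    Finset.card_filter_add_card_filter_not _
  rcases Γ.eq_empty_or_nonempty with hΓ | hΓ
  · exact liesOnConic_of_lines hg hg hg0 hg0 fun x hx =>
      (not_not.mp (Finset.filter_eq_empty_iff.mp hΓ hx)).mul_right g
  have hΓcb : SatisfiesCB (m - 1) Γ := hS.residual hg (by omega)
  have hΓcard := hΓcb.add_two_le_card hΓ
  rcases hΓcb.liesOnLine_or_two_mul_add_two_le_card hΓ (ih (m - 1) (by omega) Γ hΓcb (by omega))
    with ⟨g', hg', hg'0, hg'Γ⟩ | hΓcard'
  · refine liesOnConic_of_lines hg hg' hg0 hg'0 fun x hx => ?_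
    by_cases hgx : PVanish g x
    · exact hgx.mul_right g'
    · exact (hg'Γ x (Finset.mem_filter.mpr ⟨hx, hgx⟩)).mul_left g
  · omega

theorem SatisfiesCB.liesOnConic (hS : SatisfiesCB m S) (hcard : 2 * S.card ≤ 5 * m + 2) :
    LiesOnConic S := by
  induction m using Nat.strong_induction_on generalizing S with
  | _ m ih =>
  by_cases hS5 : S.card ≤ 5
  · exact liesOnConic_of_card_le_five hS5
  obtain ⟨f, hf, hf0, hmax⟩ := exists_conic_forall_card_le S
  have hb : 5 ≤ (S.filter fun x => PVanish f x).card := by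
    obtain ⟨T, hTS, hT⟩ := Finset.exists_subset_card_eq (show 5 ≤ S.card by omega)
    exact hT ▸ hmax T hTS (liesOnConic_of_card_le_five hT.le)
  set Γ := S.filter fun x => ¬ PVanish f x
  have hsplit : (S.filter fun x => PVanish f x).card + Γ.card = S.card :=
    Finset.card_filter_add_card_filter_not _
  rcases Γ.eq_empty_or_nonempty with hΓ | hΓ
  · exact ⟨f, hf, hf0, fun x hx => not_not.mp (Finset.filter_eq_empty_iff.mp hΓ hx)⟩
  have hΓcb : SatisfiesCB (m - 2) Γ := hS.residual hf (by omega)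
  have hΓcard := hΓcb.add_two_le_card hΓ
  have hΓconic := ih (m - 2) (by omega) hΓcb (by omega)
  have hΓb := hmax Γ (S.filter_subset _) hΓconic
  rcases hΓcb.liesOnLine_or_two_mul_add_two_le_card hΓ hΓconic with ⟨g, hg, hg0, hgΓ⟩ | hΓcard'
  · refine hS.liesOnConic_of_le_card_line (fun k hk T => ih k hk) (by omega) hcard hg hg0 ?_
    calc m ≤ Γ.card := by omega
      _ ≤ _ := Finset.card_le_card fun x hx =>
        Finset.mem_filter.mpr ⟨(Finset.mem_filter.mp hx).1, hgΓ x hx⟩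
  · omega

end Induction

end

/-- A set of `r` points in the projective plane `ℙ^2`
satisfying the Cayley–Bacharach condition `CB(m)` with `r ≤ (5/2)·m + 1` lies on
a plane curve of degree at most 2: a line, a smooth conic, or a union of two
lines. -/
theorem cayleyBacharach_plane_points_on_degree_two_curve
    (m : ℕ) (S : Finset (PPt (Fin 3)))
    (hCB : SatisfiesCB m S)
    (hr : 2 * S.card ≤ 5 * m + 2) :
    (∃ L : Set (PPt (Fin 3)), IsLine L ∧ ↑S ⊆ L) ∨
    (∃ C : Set (PPt (Fin 3)), IsSmoothConic C ∧ ↑S ⊆ C) ∨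
    (∃ L₁ L₂ : Set (PPt (Fin 3)), IsLine L₁ ∧ IsLine L₂ ∧ ↑S ⊆ L₁ ∪ L₂) := by
  exact Or.inr (hCB.liesOnConic hr).exists_smoothConic_or_exists_lines
end

section
/- Let S be a finite set of r points in a complex projective space P^N satisfying the Cayley–Bacharach condition CB(m) with r ≤ (5/2)·m + 1. If S is contained in the union of two distinct lines L1 ∪ L2 but not in a single line or a smooth conic, then each of the two lines L1 and L2 contains at least m + 1 points of S. -/
open MvPolynomial

section Helpers

open Projectivization

variable {N : ℕ}

/-- A linear functional as a degree-1 polynomial. -/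
noncomputable def linPoly {n : ℕ} (φ : Module.Dual ℂ (Fin n → ℂ)) : MvPolynomial (Fin n) ℂ :=
  ∑ i, C (φ (Pi.single i 1)) * X i

lemma linPoly_homog {n : ℕ} (φ : Module.Dual ℂ (Fin n → ℂ)) : (linPoly φ).IsHomogeneous 1 :=
  IsHomogeneous.sum _ _ _ fun i _ => by
    simpa using (isHomogeneous_C _ (φ (Pi.single i 1))).mul (isHomogeneous_X _ i)

lemma eval_linPoly {n : ℕ} (φ : Module.Dual ℂ (Fin n → ℂ)) (v : Fin n → ℂ) :
    eval v (linPoly φ) = φ v := by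
  have hv : v = ∑ i, (v i) • (Pi.single i (1:ℂ) : Fin n → ℂ) := by
    conv_lhs => rw [← Finset.univ_sum_single v]
    congr 1; ext i j; rw [← Pi.single_smul, smul_eq_mul, mul_one]
  rw [linPoly]
  conv_rhs => rw [hv]
  simp [map_sum, mul_comm]

/-- Any representative of a projective point lies in its associated line. -/
lemma rep_mem_submodule {x : PPt (Fin (N+1))} {v : Fin (N+1) → ℂ} (hv : v ≠ 0)
    (hmk : Projectivization.mk ℂ v hv = x) : v ∈ x.submodule := by
  rw [← hmk, Projectivization.submodule_mk]
  exact Submodule.mem_span_singleton_self v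

lemma rep_notMem_submodule_of_ne {x y : PPt (Fin (N+1))} (hxy : x ≠ y) :
    x.rep ∉ y.submodule := by
  intro h
  rw [Projectivization.submodule_eq, Submodule.mem_span_singleton] at h
  obtain ⟨a, ha⟩ := h
  have ha0 : a ≠ 0 := by
    rintro rfl; exact x.rep_nonzero (by simp [← ha])
  apply hxy
  rw [← Projectivization.mk_rep x, ← Projectivization.mk_rep y]
  rw [Projectivization.mk_eq_mk_iff]
  exact ⟨Units.mk0 a ha0, ha⟩

/-- Key lemma: if `S` satisfies `CB(m)`, `m ≥ 1`, `S ⊆ L₁ ∪ P(W₂)`, and some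
point `p ∈ S` is not on `P(W₂)`, then `L₁` contains at least `m+1` points of `S`. -/
lemma key_lemma (m : ℕ) (hm : 1 ≤ m) (S : Finset (PPt (Fin (N + 1))))
    (hCB : SatisfiesCB m S)
    (W₂ : Submodule ℂ (Fin (N+1) → ℂ)) (L₁ : Set (PPt (Fin (N + 1))))
    (hsub : ↑S ⊆ L₁ ∪ LinSet W₂)
    (p : PPt (Fin (N + 1))) (hpS : p ∈ S) (hp2 : ¬ p.submodule ≤ W₂) :
    m + 1 ≤ ((S : Set (PPt (Fin (N + 1)))) ∩ L₁).ncard := by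
  classical
  by_contra hlt
  push_neg at hlt
  -- the points of S on L₁
  set F : Finset (PPt (Fin (N+1))) := S.filter (· ∈ L₁) with hF
  have hFset : (S : Set (PPt (Fin (N + 1)))) ∩ L₁ = ↑F := by
    ext x; simp [hF, Set.mem_inter_iff]
  have hFcard : F.card ≤ m := by
    have := hlt
    rw [hFset, Set.ncard_coe_finset] at this
    omega
  have hpL₁ : p ∈ L₁ := by
    rcases hsub hpS with h | h
    · exact h
    · exact absurd h hp2
  have hpF : p ∈ F := by simp [hF, hpS, hpL₁]
  set T : Finset (PPt (Fin (N+1))) := F.erase p with hT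
  have hTcard : T.card < m := by
    have hF1 : 1 ≤ F.card := Finset.card_pos.2 ⟨p, hpF⟩
    rw [hT, Finset.card_erase_of_mem hpF]
    omega
  -- p.rep is not in W₂
  have hprep : p.rep ∉ W₂ := by
    intro h
    apply hp2
    rw [Projectivization.submodule_eq]
    exact (Submodule.span_singleton_le_iff_mem _ _).2 h
  -- functional vanishing on W₂ but not at p.rep
  obtain ⟨φ₂, hφ₂p, hφ₂W⟩ := Submodule.exists_dual_map_eq_bot_of_notMem hprep inferInstance
  have hφ₂W' : ∀ w ∈ W₂, φ₂ w = 0 := by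
    intro w hw
    have : φ₂ w ∈ W₂.map φ₂ := Submodule.mem_map_of_mem hw
    rw [hφ₂W] at this
    simpa using this
  -- for each q ∈ T choose a functional vanishing on q but not at p.rep
  have hchoice : ∀ q ∈ T, ∃ φ : Module.Dual ℂ (Fin (N+1) → ℂ),
      φ p.rep ≠ 0 ∧ ∀ w ∈ q.submodule, φ w = 0 := by
    intro q hq
    have hqp : q ≠ p := (Finset.mem_erase.1 hq).1
    have : p.rep ∉ q.submodule := rep_notMem_submodule_of_ne (Ne.symm hqp)
    obtain ⟨φ, hφp, hφq⟩ := Submodule.exists_dual_map_eq_bot_of_notMem this inferInstance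
    refine ⟨φ, hφp, fun w hw => ?_⟩
    have : φ w ∈ q.submodule.map φ := Submodule.mem_map_of_mem hw
    rw [hφq] at this
    simpa using this
  choose! Φ hΦp hΦq using hchoice
  -- the degree-m form
  set f : MvPolynomial (Fin (N+1)) ℂ :=
    (linPoly φ₂) ^ (m - T.card) * ∏ q ∈ T, linPoly (Φ q) with hf
  have hfhom : f.IsHomogeneous m := by
    have h1 : ((linPoly φ₂) ^ (m - T.card)).IsHomogeneous (m - T.card) := by
      simpa using (linPoly_homog φ₂).pow (m - T.card)
    have h2 : (∏ q ∈ T, linPoly (Φ q)).IsHomogeneous T.card := by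
      simpa using IsHomogeneous.prod T _ (fun _ => 1) (fun q _ => linPoly_homog (Φ q))
    have := h1.mul h2
    rwa [Nat.sub_add_cancel hTcard.le] at this
  -- f vanishes at every point of S other than p
  have hvan : ∀ q ∈ S, q ≠ p → PVanish f q := by
    intro q hqS hqp v hv hmk
    rw [hf, map_mul, map_pow]
    by_cases hq2 : q ∈ LinSet W₂
    · have hvW : v ∈ W₂ := hq2 (rep_mem_submodule hv hmk)
      rw [eval_linPoly, hφ₂W' v hvW, zero_pow (by omega), zero_mul]
    · have hqL₁ : q ∈ L₁ := (hsub hqS).resolve_right hq2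
      have hqT : q ∈ T := by simp [hT, hF, hqp, hqS, hqL₁]
      rw [map_prod, Finset.prod_eq_zero hqT, mul_zero]
      rw [eval_linPoly]
      exact hΦq q hqT v (rep_mem_submodule hv hmk)
  -- but f does not vanish at p
  have hCBp := hCB f hfhom p hpS hvan p.rep p.rep_nonzero (Projectivization.mk_rep p)
  rw [hf, map_mul, map_pow, map_prod, eval_linPoly] at hCBp
  have : ∀ q ∈ T, eval p.rep (linPoly (Φ q)) ≠ 0 := by
    intro q hq
    rw [eval_linPoly]
    exact hΦp q hq
  exact mul_ne_zero (pow_ne_zero _ hφ₂p) (Finset.prod_ne_zero_iff.2 this) hCBp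

end Helpers

/-- If a set `S` of points in `ℙ^N` satisfying `CB(m)` with
`#S ≤ (5/2)·m + 1` lies on the union of two distinct lines, but on no single
line and on no smooth conic, then each of the two lines contains at least
`m + 1` of the points of `S`. -/
theorem cayleyBacharach_two_lines_each_contains_m_add_one_points
    (N m : ℕ) (S : Finset (PPt (Fin (N + 1))))
    (hCB : SatisfiesCB m S)
    (hr : 2 * S.card ≤ 5 * m + 2)
    (L₁ L₂ : Set (PPt (Fin (N + 1))))
    (hL₁ : IsLine L₁) (hL₂ : IsLine L₂) (hne : L₁ ≠ L₂)
    (hsub : ↑S ⊆ L₁ ∪ L₂)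
    (hnoline : ¬ ∃ L : Set (PPt (Fin (N + 1))), IsLine L ∧ ↑S ⊆ L)
    (hnoconic : ¬ ∃ C : Set (PPt (Fin (N + 1))), IsSmoothConic C ∧ ↑S ⊆ C) :
    m + 1 ≤ ((S : Set (PPt (Fin (N + 1)))) ∩ L₁).ncard ∧
    m + 1 ≤ ((S : Set (PPt (Fin (N + 1)))) ∩ L₂).ncard := by
  classical
  -- m = 0 is impossible
  rcases Nat.eq_zero_or_pos m with hm | hm
  · exfalso
    subst hm
    have hcard : S.card ≤ 1 := by omega
    rcases Finset.card_le_one_iff_subset_singleton.1 hcard with ⟨x, hx⟩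
    rcases (Finset.subset_singleton_iff.1 hx) with rfl | rfl
    · exact hnoline ⟨L₁, hL₁, by simp⟩
    · rcases hsub (by simp : x ∈ ({x} : Finset (PPt (Fin (N+1))))) with h | h
      · exact hnoline ⟨L₁, hL₁, by simpa using h⟩
      · exact hnoline ⟨L₂, hL₂, by simpa using h⟩
  · -- there is a point of S on L₁ but not on L₂, and vice versa
    obtain ⟨W₁, hW₁rank, hW₁⟩ := hL₁
    obtain ⟨W₂, hW₂rank, hW₂⟩ := hL₂
    have h1 : ∃ p ∈ S, ¬ p.submodule ≤ W₂ := by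
      by_contra h
      push_neg at h
      exact hnoline ⟨L₂, ⟨W₂, hW₂rank, hW₂⟩, fun x hx => by
        rw [hW₂]; exact h x (by exact_mod_cast hx)⟩
    have h2 : ∃ p ∈ S, ¬ p.submodule ≤ W₁ := by
      by_contra h
      push_neg at h
      exact hnoline ⟨L₁, ⟨W₁, hW₁rank, hW₁⟩, fun x hx => by
        rw [hW₁]; exact h x (by exact_mod_cast hx)⟩
    obtain ⟨p₁, hp₁S, hp₁⟩ := h1
    obtain ⟨p₂, hp₂S, hp₂⟩ := h2
    constructor
    · exact key_lemma m hm S hCB W₂ L₁ (by rw [← hW₂]; exact hsub) p₁ hp₁S hp₁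
    · exact key_lemma m hm S hCB W₁ L₂ (by rw [← hW₁]; exact (Set.union_comm L₁ L₂ ▸ hsub)) p₂ hp₂S hp₂
end
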